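/- arXiv:1307.6447 — 2 statements merged into one kernel-verified Lean document; each statement's English description precedes it below -/
import Mathlib

section
/- Let g be a real Lie algebra with an ad-invariant inner product, let σ ∈ g be a unit vector, and let a ∈ V ⊗ g where V is a 4-dimensional real inner product space. Write a = ν ⊗ σ + 𝔞 where ν ∈ V is defined by ν = ⟨σ, a⟩ componentwise and ⟨σ, 𝔞⟩ = 0 componentwise. If moreover the V-inner-product pairing of ν with each g-component of 𝔞 vanishes and g = su(2) with the inner product ⟨x,y⟩ = -½ trace(xy), then |a ∧ a|^2 = 4|ν|^2|𝔞|^2 + |𝔞 ∧ 𝔞|^2, where a ∧ a denotes the Λ^2 V ⊗ g element with components [a_α, a_β]. -/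
/-!
Under `su(2) ≅ ℝ³` the bracket is twice the cross product, so the Lagrange identity gives
`|[x, y]|² = 4 (|x|²|y|² - ⟨x, y⟩²)`. Summed over `α, β`, the left side is therefore a sum of
`2 × 2` principal minors of the Gram matrix `G = ν νᵀ + g` of `a`, where `g` is the Gram matrix
of `𝔞`; the cross terms `νᵀ g ν` vanish because `Σ_α ν_α 𝔞_α = 0` puts `ν` in the kernel of `g`.
-/

open Matrix

/-- The ad-invariant inner product `⟨x,y⟩ = -½ trace (x y)` on `su(2)`,
realized on 2×2 complex matrices. -/
noncomputable def su2ip (x y : Matrix (Fin 2) (Fin 2) ℂ) : ℝ :=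
  (-(1 / 2 : ℂ) * (x * y).trace).re

theorem Matrix.trace_lie_mul_self_fin_two {R : Type*} [CommRing R]
    {x y : Matrix (Fin 2) (Fin 2) R} (hx : x.trace = 0) (hy : y.trace = 0) :
    (⁅x, y⁆ * ⁅x, y⁆).trace = 2 * ((x * y).trace ^ 2 - (x * x).trace * (y * y).trace) := by
  rw [trace_fin_two, ← eq_neg_iff_add_eq_zero] at hx hy
  simp only [Ring.lie_def, trace_fin_two, sub_apply, mul_apply, Fin.sum_univ_two, hx, hy]
  ring

def su2 : Submodule ℝ (Matrix (Fin 2) (Fin 2) ℂ) where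
  carrier := {x | xᴴ = -x ∧ x.trace = 0}
  add_mem' := by
    rintro x y ⟨hx, hx'⟩ ⟨hy, hy'⟩
    exact ⟨by rw [conjTranspose_add, hx, hy, neg_add], by rw [trace_add, hx', hy', add_zero]⟩
  zero_mem' := ⟨by simp, trace_zero _ _⟩
  smul_mem' := by
    rintro r x ⟨hx, hx'⟩
    exact ⟨by rw [conjTranspose_smul, hx, star_trivial, smul_neg],
      by rw [trace_smul, hx', smul_zero]⟩

theorem lie_mem_su2 {x y : Matrix (Fin 2) (Fin 2) ℂ} (hx : x ∈ su2) (hy : y ∈ su2) :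
    ⁅x, y⁆ ∈ su2 :=
  ⟨by rw [Ring.lie_def, conjTranspose_sub, conjTranspose_mul, conjTranspose_mul, hx.1, hy.1,
      neg_mul_neg, neg_mul_neg, neg_sub],
    LieAlgebra.matrix_trace_commutator_zero _ _ x y⟩

theorem su2ip_comm (x y : Matrix (Fin 2) (Fin 2) ℂ) : su2ip x y = su2ip y x := by
  rw [su2ip, su2ip, trace_mul_comm]

noncomputable def su2Form : LinearMap.BilinForm ℝ (Matrix (Fin 2) (Fin 2) ℂ) :=
  LinearMap.mk₂ ℝ su2ip
    (fun x y z => by simp only [su2ip, add_mul, trace_add, mul_add, Complex.add_re])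
    (fun r x y => by simp [su2ip, Complex.real_smul, mul_left_comm])
    (fun x y z => by simp only [su2ip, mul_add, trace_add, Complex.add_re])
    (fun r x y => by simp [su2ip, Complex.real_smul, mul_left_comm])

theorem su2Form_apply (x y : Matrix (Fin 2) (Fin 2) ℂ) : su2Form x y = su2ip x y := rfl

theorem ofReal_su2ip {x y : Matrix (Fin 2) (Fin 2) ℂ} (hx : xᴴ = -x) (hy : yᴴ = -y) :
    (su2ip x y : ℂ) = -(1 / 2) * (x * y).trace := by
  have hconj : star (x * y).trace = (x * y).trace := by
    rw [← trace_conjTranspose, conjTranspose_mul, hx, hy, neg_mul_neg, trace_mul_comm]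
  rw [su2ip, ← Complex.conj_eq_iff_re.mp hconj]
  simp

theorem su2ip_lie_self {x y : Matrix (Fin 2) (Fin 2) ℂ} (hx : x ∈ su2) (hy : y ∈ su2) :
    su2ip ⁅x, y⁆ ⁅x, y⁆ = 4 * (su2ip x x * su2ip y y - su2ip x y ^ 2) := by
  have hxy := lie_mem_su2 hx hy
  apply Complex.ofReal_injective
  push_cast
  rw [ofReal_su2ip hxy.1 hxy.1, ofReal_su2ip hx.1 hx.1, ofReal_su2ip hy.1 hy.1,
    ofReal_su2ip hx.1 hy.1, trace_lie_mul_self_fin_two hx.2 hy.2]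
  ring

theorem sum_principal_minors_add_rank_one {ι : Type*} [Fintype ι] {G g : ι → ι → ℝ}
    {ν : ι → ℝ} (hG : ∀ α β, G α β = ν α * ν β + g α β) (hν : ∀ α, ∑ β, g α β * ν β = 0) :
    ∑ α, ∑ β, (G α α * G β β - G α β ^ 2) =
      2 * (∑ α, ν α ^ 2) * (∑ α, g α α) + ∑ α, ∑ β, (g α α * g β β - g α β ^ 2) := by
  have hterm : ∀ α β, G α α * G β β - G α β ^ 2 =
      ν α ^ 2 * g β β + g α α * ν β ^ 2 - 2 * ν α * (g α β * ν β) +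
        (g α α * g β β - g α β ^ 2) := fun α β => by
    rw [hG, hG, hG]
    ring
  simp only [hterm, Finset.sum_add_distrib, Finset.sum_sub_distrib, ← Finset.mul_sum,
    ← Finset.sum_mul, hν, mul_zero, Finset.sum_const_zero]
  ring

/-- The pointwise algebraic identity (fourth bullet of (4.5)): if an `su(2)`-valued
1-form `a` on a 4-dimensional inner product space is decomposed as
`a = ν ⊗ σ + 𝔞` relative to a unit element `σ ∈ su(2)`, with `⟨σ, 𝔞_α⟩ = 0`
and `Σ_α ν_α 𝔞_α = 0`, then `|a ∧ a|² = 4|ν|²|𝔞|² + |𝔞 ∧ 𝔞|²`, where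
`(a ∧ a)_{αβ} = [a_α, a_β]` and `|ω|² = ½ Σ_{α,β} |ω_{αβ}|²` for 2-forms. -/
theorem su2_wedge_norm_split (σ : Matrix (Fin 2) (Fin 2) ℂ)
    (a : Fin 4 → Matrix (Fin 2) (Fin 2) ℂ)
    (hσskew : σᴴ = -σ) (hσtr : σ.trace = 0) (hσunit : su2ip σ σ = 1)
    (haskew : ∀ α, (a α)ᴴ = -(a α)) (hatr : ∀ α, (a α).trace = 0)
    (ν : Fin 4 → ℝ) (𝔞 : Fin 4 → Matrix (Fin 2) (Fin 2) ℂ)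
    (hν : ∀ α, ν α = su2ip σ (a α))
    (h𝔞 : ∀ α, 𝔞 α = a α - ν α • σ)
    (horth : ∑ α, ν α • 𝔞 α = 0) :
    (1 / 2 : ℝ) * ∑ α, ∑ β, su2ip ⁅a α, a β⁆ ⁅a α, a β⁆ =
      4 * (∑ α, ν α ^ 2) * (∑ α, su2ip (𝔞 α) (𝔞 α)) +
        (1 / 2 : ℝ) * ∑ α, ∑ β, su2ip ⁅𝔞 α, 𝔞 β⁆ ⁅𝔞 α, 𝔞 β⁆ := by
  have hσ : σ ∈ su2 := ⟨hσskew, hσtr⟩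
  have ha : ∀ α, a α ∈ su2 := fun α => ⟨haskew α, hatr α⟩
  have h𝔞mem : ∀ α, 𝔞 α ∈ su2 := fun α => h𝔞 α ▸ su2.sub_mem (ha α) (su2.smul_mem _ hσ)
  have ha_eq : ∀ α, a α = ν α • σ + 𝔞 α := fun α => sub_eq_iff_eq_add'.mp (h𝔞 α).symm
  have hσ𝔞 : ∀ α, su2ip σ (𝔞 α) = 0 := fun α => by
    rw [h𝔞, ← su2Form_apply, map_sub, map_smul, su2Form_apply, su2Form_apply, ← hν, hσunit,
      smul_eq_mul, mul_one, sub_self]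
  have hgram : ∀ α β, su2ip (a α) (a β) = ν α * ν β + su2ip (𝔞 α) (𝔞 β) := fun α β => by
    rw [ha_eq α, ha_eq β]
    simp only [← su2Form_apply, map_add, map_smul, LinearMap.add_apply, LinearMap.smul_apply]
    simp only [su2Form_apply, hσunit, hσ𝔞, su2ip_comm (𝔞 _) σ, smul_eq_mul]
    ring
  have hker : ∀ α, ∑ β, su2ip (𝔞 α) (𝔞 β) * ν β = 0 := fun α => by
    simpa only [map_sum, map_smul, map_zero, smul_eq_mul, su2Form_apply, mul_comm] using
      congrArg (su2Form (𝔞 α)) horth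
  simp only [su2ip_lie_self (ha _) (ha _), su2ip_lie_self (h𝔞mem _) (h𝔞mem _), ← Finset.mul_sum,
    sum_principal_minors_add_rank_one hgram hker]
  ring
end

section
/- Let B' ⊂ B ⊂ R^n be concentric balls, with B of radius r and B' of radius r/2, Z ⊂ B a closed set, and v a bounded function on B, smooth on B \ Z, satisfying: (i) there are constants c_* and exponent α ∈ (0,1] such that |v(p) - v(q)| ≤ c_* δ^{-3} dist(p,q)^{1/4} whenever p, q ∈ B' both have distance ≥ 2δ from Z (for every δ ∈ (0, δ_0]); and (ii) |v(p)| ≤ c_0 dist(p, Z)^ν for p with dist(p, Z) < δ_0, where ν > 0. Then v is Hölder continuous on B' with exponent min(1/16, ν/16): |v(p) - v(q)| ≤ C dist(p,q)^{min(1/16, ν/16)} for all p, q ∈ B'. -/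
open Metric Set

/-!
Put `D = dist p q` and `ε = D ^ (1/16)`. For `D` bounded below the estimate is just the bound
`|v| ≤ M`. For small `D` either one of `p, q` lies within `ε` of `Z`, and then both do within
`2ε`, so the vanishing of `v` gives `|v p - v q| ≲ ε ^ ν = D ^ (ν/16)`; or both lie at distance
`≥ ε` from `Z`, and the interior estimate with `δ = ε / 2` gives
`|v p - v q| ≲ ε ^ (-3) * D ^ (1/4) = D ^ (1/16)`.
-/

lemma abs_sub_le_div_rpow_mul_rpow {a b M d D β : ℝ} (ha : |a| ≤ M) (hb : |b| ≤ M) (hd : 0 < d)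
    (hdD : d ≤ D) (hβ : 0 ≤ β) : |a - b| ≤ 2 * M / d ^ β * D ^ β := by
  have hdβ : 0 < d ^ β := Real.rpow_pos_of_pos hd β
  have hM : 0 ≤ M := (abs_nonneg a).trans ha
  calc |a - b| ≤ |a| + |b| := abs_sub _ _
    _ ≤ 2 * M / d ^ β * d ^ β := by rw [div_mul_cancel₀ _ hdβ.ne']; linarith
    _ ≤ 2 * M / d ^ β * D ^ β := by gcongr

lemma Real.rpow_div_two_rpow_neg_three_mul_rpow {D : ℝ} (hD : 0 < D) :
    (D ^ ((1 : ℝ) / 16) / 2) ^ (-(3 : ℝ)) * D ^ ((1 : ℝ) / 4) = 8 * D ^ ((1 : ℝ) / 16) := by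
  have h4 : D ^ ((1 : ℝ) / 4) = (D ^ ((1 : ℝ) / 16)) ^ 4 := by
    rw [← Real.rpow_natCast, ← Real.rpow_mul hD.le]
    norm_num
  have h3 : (D ^ ((1 : ℝ) / 16) / 2) ^ (-(3 : ℝ)) = ((D ^ ((1 : ℝ) / 16) / 2) ^ 3)⁻¹ := by
    rw [Real.rpow_neg (by positivity), ← Real.rpow_natCast]
    norm_num
  have hε : 0 < D ^ ((1 : ℝ) / 16) := Real.rpow_pos_of_pos hD _
  rw [h4, h3]
  field_simp
  norm_num

section Interpolation

variable {X : Type*} [PseudoMetricSpace X] {S Z : Set X} {v : X → ℝ} {p q : X}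

lemma abs_sub_le_of_infDist_lt {c0 ν δ0 ε : ℝ} (hν : 0 ≤ ν) (hc0 : 0 ≤ c0)
    (hii : ∀ x ∈ S, infDist x Z < δ0 → |v x| ≤ c0 * infDist x Z ^ ν)
    (hp : p ∈ S) (hq : q ∈ S) (hpZ : infDist p Z < ε) (hpq : dist p q ≤ ε) (hε : 2 * ε ≤ δ0) :
    |v p - v q| ≤ c0 * (1 + 2 ^ ν) * ε ^ ν := by
  have hqZ : infDist q Z < 2 * ε := by
    linarith [infDist_le_infDist_add_dist (x := q) (y := p) (s := Z), dist_comm p q]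
  have hvp : |v p| ≤ c0 * ε ^ ν :=
    (hii p hp (by linarith [infDist_nonneg (x := p) (s := Z)])).trans
      (by gcongr; exact infDist_nonneg)
  have hvq : |v q| ≤ c0 * (2 ^ ν * ε ^ ν) := by
    rw [← Real.mul_rpow zero_le_two (infDist_nonneg.trans hpZ.le)]
    exact (hii q hq (by linarith)).trans
      (by gcongr; exact infDist_nonneg)
  calc |v p - v q| ≤ |v p| + |v q| := abs_sub _ _
    _ ≤ c0 * (1 + 2 ^ ν) * ε ^ ν := by linarith

lemma abs_sub_le_of_rpow_le_infDist {cstar δ0 : ℝ}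
    (hi : ∀ δ ∈ Ioc (0 : ℝ) δ0, ∀ p ∈ S, ∀ q ∈ S, 2 * δ ≤ infDist p Z → 2 * δ ≤ infDist q Z →
      |v p - v q| ≤ cstar * δ ^ (-(3 : ℝ)) * dist p q ^ ((1 : ℝ) / 4))
    (hp : p ∈ S) (hq : q ∈ S) (hpq : 0 < dist p q)
    (hδ0 : dist p q ^ ((1 : ℝ) / 16) ≤ 2 * δ0)
    (hpZ : dist p q ^ ((1 : ℝ) / 16) ≤ infDist p Z)
    (hqZ : dist p q ^ ((1 : ℝ) / 16) ≤ infDist q Z) :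
    |v p - v q| ≤ 8 * cstar * dist p q ^ ((1 : ℝ) / 16) := by
  have hε : 0 < dist p q ^ ((1 : ℝ) / 16) := Real.rpow_pos_of_pos hpq _
  have h := hi (dist p q ^ ((1 : ℝ) / 16) / 2) ⟨by positivity, by linarith⟩ p hp q hq
    (by linarith) (by linarith)
  rwa [mul_assoc, Real.rpow_div_two_rpow_neg_three_mul_rpow hpq, ← mul_assoc,
    mul_comm cstar] at h

lemma abs_sub_le_of_dist_le {cstar c0 ν δ0 : ℝ} (hδ0 : 0 < δ0) (hν : 0 < ν) (hc0 : 0 ≤ c0)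
    (hi : ∀ δ ∈ Ioc (0 : ℝ) δ0, ∀ p ∈ S, ∀ q ∈ S, 2 * δ ≤ infDist p Z → 2 * δ ≤ infDist q Z →
      |v p - v q| ≤ cstar * δ ^ (-(3 : ℝ)) * dist p q ^ ((1 : ℝ) / 4))
    (hii : ∀ x ∈ S, infDist x Z < δ0 → |v x| ≤ c0 * infDist x Z ^ ν)
    (hp : p ∈ S) (hq : q ∈ S) (hpq : 0 < dist p q) (hsmall : dist p q ≤ min 1 (δ0 / 2) ^ 16) :
    |v p - v q| ≤ max (c0 * (1 + 2 ^ ν)) (8 * cstar) * dist p q ^ min ((1 : ℝ) / 16) (ν / 16) := by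
  set D := dist p q
  set ε := D ^ ((1 : ℝ) / 16)
  set β := min ((1 : ℝ) / 16) (ν / 16)
  set C := max (c0 * (1 + 2 ^ ν)) (8 * cstar)
  have hη : 0 < min 1 (δ0 / 2) := lt_min one_pos (half_pos hδ0)
  have hD1 : D ≤ 1 := hsmall.trans (pow_le_one₀ hη.le (min_le_left _ _))
  have hε : ε ≤ min 1 (δ0 / 2) :=
    calc ε ≤ (min 1 (δ0 / 2) ^ 16) ^ ((1 : ℝ) / 16) :=
          Real.rpow_le_rpow hpq.le hsmall (by norm_num)
      _ = min 1 (δ0 / 2) := by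
        rw [← Real.rpow_natCast, ← Real.rpow_mul hη.le]
        norm_num
  have hDε : D ≤ ε :=
    calc D = D ^ (1 : ℝ) := (Real.rpow_one D).symm
      _ ≤ ε := Real.rpow_le_rpow_of_exponent_ge' hpq.le hD1 (by norm_num) (by norm_num)
  have hmono : ∀ e, β ≤ e → D ^ e ≤ D ^ β :=
    fun e he ↦ Real.rpow_le_rpow_of_exponent_ge' hpq.le hD1 (by positivity) he
  by_cases hnear : infDist p Z < ε ∨ infDist q Z < ε
  · have hδ0 : 2 * ε ≤ δ0 := by linarith [min_le_right 1 (δ0 / 2)]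
    have h : |v p - v q| ≤ c0 * (1 + 2 ^ ν) * ε ^ ν := by
      rcases hnear with hpZ | hqZ
      · exact abs_sub_le_of_infDist_lt hν.le hc0 hii hp hq hpZ hDε hδ0
      · rw [abs_sub_comm]
        exact abs_sub_le_of_infDist_lt hν.le hc0 hii hq hp hqZ (dist_comm p q ▸ hDε) hδ0
    calc |v p - v q| ≤ c0 * (1 + 2 ^ ν) * D ^ (ν / 16) := by
          rwa [show D ^ (ν / 16) = ε ^ ν by rw [← Real.rpow_mul hpq.le]; ring_nf]
      _ ≤ C * D ^ β := by
        gcongr ?_ * ?_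
        · exact le_max_left _ _
        · exact hmono _ (min_le_right _ _)
  · push Not at hnear
    calc |v p - v q| ≤ 8 * cstar * ε :=
          abs_sub_le_of_rpow_le_infDist hi hp hq hpq (by linarith [min_le_right 1 (δ0 / 2)])
            hnear.1 hnear.2
      _ ≤ C * D ^ β := by
        gcongr ?_ * ?_
        · exact le_max_right _ _
        · exact hmono _ (min_le_left _ _)

end Interpolation

theorem exists_holder_of_interior_holder_of_vanishing {X : Type*} [MetricSpace X]
    {S Z : Set X} {v : X → ℝ} {M cstar c0 ν δ0 : ℝ}
    (hδ0 : 0 < δ0) (hν : 0 < ν) (hc0 : 0 ≤ c0)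
    (hbdd : ∀ x ∈ S, |v x| ≤ M)
    (hi : ∀ δ ∈ Ioc (0 : ℝ) δ0, ∀ p ∈ S, ∀ q ∈ S, 2 * δ ≤ infDist p Z → 2 * δ ≤ infDist q Z →
      |v p - v q| ≤ cstar * δ ^ (-(3 : ℝ)) * dist p q ^ ((1 : ℝ) / 4))
    (hii : ∀ x ∈ S, infDist x Z < δ0 → |v x| ≤ c0 * infDist x Z ^ ν) :
    ∃ C : ℝ, ∀ p ∈ S, ∀ q ∈ S, |v p - v q| ≤ C * dist p q ^ min ((1 : ℝ) / 16) (ν / 16) := by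
  have hβ : 0 < min ((1 : ℝ) / 16) (ν / 16) := lt_min (by norm_num) (by positivity)
  have hd : 0 < min 1 (δ0 / 2) ^ 16 := pow_pos (lt_min one_pos (half_pos hδ0)) 16
  refine ⟨max (max (c0 * (1 + 2 ^ ν)) (8 * cstar))
    (2 * M / (min 1 (δ0 / 2) ^ 16) ^ min ((1 : ℝ) / 16) (ν / 16)), fun p hp q hq ↦ ?_⟩
  rcases (dist_nonneg (x := p) (y := q)).eq_or_lt with hpq | hpq
  · rw [dist_eq_zero.mp hpq.symm, sub_self, abs_zero, dist_self, Real.zero_rpow hβ.ne', mul_zero]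
  rcases le_or_gt (dist p q) (min 1 (δ0 / 2) ^ 16) with hsmall | hlarge
  · exact (abs_sub_le_of_dist_le hδ0 hν hc0 hi hii hp hq hpq hsmall).trans
      (mul_le_mul_of_nonneg_right (le_max_left _ _) (by positivity))
  · exact (abs_sub_le_div_rpow_mul_rpow (hbdd p hp) (hbdd q hq) hd hlarge.le hβ.le).trans
      (mul_le_mul_of_nonneg_right (le_max_right _ _) (by positivity))

theorem holder_interpolation_general (n : ℕ) (p0 : EuclideanSpace ℝ (Fin n)) (r : ℝ)
    (hr : 0 < r) (Z : Set (EuclideanSpace ℝ (Fin n)))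
    (v : EuclideanSpace ℝ (Fin n) → ℝ) (Mv cstar c0 ν δ0 : ℝ)
    (hδ0 : 0 < δ0) (hν : 0 < ν) (hc0 : 0 < c0)
    (hbdd : ∀ x ∈ ball p0 r, |v x| ≤ Mv)
    (hi : ∀ δ ∈ Ioc (0:ℝ) δ0, ∀ p ∈ ball p0 (r / 2), ∀ q ∈ ball p0 (r / 2),
      2 * δ ≤ infDist p Z → 2 * δ ≤ infDist q Z →
      |v p - v q| ≤ cstar * δ ^ (-(3:ℝ)) * dist p q ^ ((1:ℝ) / 4))
    (hii : ∀ p ∈ ball p0 r, infDist p Z < δ0 →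
      |v p| ≤ c0 * infDist p Z ^ ν) :
    ∃ C : ℝ, ∀ p ∈ ball p0 (r / 2), ∀ q ∈ ball p0 (r / 2),
      |v p - v q| ≤ C * dist p q ^ min ((1:ℝ) / 16) (ν / 16) := by
  have hball : ball p0 (r / 2) ⊆ ball p0 r := ball_subset_ball (by linarith)
  exact exists_holder_of_interior_holder_of_vanishing hδ0 hν hc0.le
    (fun x hx ↦ hbdd x (hball hx)) hi (fun x hx ↦ hii x (hball hx))

/-- The interpolation argument of Proposition 8.1 (Part 2): combining interior
Hölder estimates away from a closed set `Z` (with constant blowing up like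
`δ⁻³`) with polynomial vanishing `|v| ≤ c₀ dist(·,Z)^ν` near `Z` yields global
Hölder continuity on the half-sized concentric ball, with exponent
`min(1/16, ν/16)`. -/
theorem holder_interpolation (n : ℕ) (p0 : EuclideanSpace ℝ (Fin n)) (r : ℝ)
    (hr : 0 < r) (Z : Set (EuclideanSpace ℝ (Fin n))) (hZcl : IsClosed Z)
    (hZB : Z ⊆ ball p0 r)
    (v : EuclideanSpace ℝ (Fin n) → ℝ) (Mv cstar c0 ν δ0 : ℝ)
    (hδ0 : 0 < δ0) (hν : 0 < ν) (hcstar : 0 < cstar) (hc0 : 0 < c0)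
    (hbdd : ∀ x ∈ ball p0 r, |v x| ≤ Mv)
    (hsm : ContDiffOn ℝ (⊤ : ℕ∞) v (ball p0 r \ Z))
    (hi : ∀ δ ∈ Ioc (0:ℝ) δ0, ∀ p ∈ ball p0 (r / 2), ∀ q ∈ ball p0 (r / 2),
      2 * δ ≤ infDist p Z → 2 * δ ≤ infDist q Z →
      |v p - v q| ≤ cstar * δ ^ (-(3:ℝ)) * dist p q ^ ((1:ℝ) / 4))
    (hii : ∀ p ∈ ball p0 r, infDist p Z < δ0 →
      |v p| ≤ c0 * infDist p Z ^ ν) :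
    ∃ C : ℝ, ∀ p ∈ ball p0 (r / 2), ∀ q ∈ ball p0 (r / 2),
      |v p - v q| ≤ C * dist p q ^ min ((1:ℝ) / 16) (ν / 16) :=
  holder_interpolation_general n p0 r hr Z v Mv cstar c0 ν δ0 hδ0 hν hc0 hbdd hi hii
end
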